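/- For every vertex v of the Grandparent graph GP: every automorphism of GP fixing v also fixes p(v), so the orbit of p(v) under the stabilizer Aut(GP)_v has exactly 1 element, while the orbit of v under the stabilizer Aut(GP)_{p(v)} has exactly 2 elements. In particular the action of Aut(GP) on GP is not unimodular. -/

import Mathlib

open Filter Finset

noncomputable section

variable {V : Type*}

/-- `w : ℕ → V` represents a walk of length `n` from `v`: consecutive vertices are
adjacent and the values are pinned to `w n` from index `n` on. -/
noncomputable def IsWalkFrom (G : SimpleGraph V) (n : ℕ) (v : V) (w : ℕ → V) : Prop :=
  w 0 = v ∧ (∀ i < n, G.Adj (w i) (w (i + 1))) ∧ (∀ i, n ≤ i → w i = w n)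

/-- A self-avoiding walk of length `n` starting at `v`. -/
noncomputable def IsSAWFrom (G : SimpleGraph V) (n : ℕ) (v : V) (w : ℕ → V) : Prop :=
  IsWalkFrom G n v w ∧ Set.InjOn w (Set.Iic n)

/-- A bridge with respect to the height function `h`. -/
noncomputable def IsBridgeFrom (G : SimpleGraph V) (h : V → ℤ) (n : ℕ) (v : V) (w : ℕ → V) : Prop :=
  IsSAWFrom G n v w ∧ ∀ i, 1 ≤ i → i ≤ n → h (w 0) < h (w i) ∧ h (w i) ≤ h (w n)

/-- A reversed bridge with respect to the height function `h`. -/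
noncomputable def IsRBridgeFrom (G : SimpleGraph V) (h : V → ℤ) (n : ℕ) (v : V) (w : ℕ → V) : Prop :=
  IsSAWFrom G n v w ∧ ∀ i, 1 ≤ i → i ≤ n → h (w 0) > h (w i) ∧ h (w i) ≥ h (w n)

/-- A half-space walk with respect to the height function `h`. -/
noncomputable def IsHSWFrom (G : SimpleGraph V) (h : V → ℤ) (n : ℕ) (v : V) (w : ℕ → V) : Prop :=
  IsSAWFrom G n v w ∧ ∀ i, 1 ≤ i → i ≤ n → h (w 0) < h (w i)

/-- The span of (the first `n+1` vertices of) a walk. -/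
noncomputable def walkSpan (h : V → ℤ) (n : ℕ) (w : ℕ → V) : ℤ :=
  ((Finset.range (n + 1)).sup' ⟨0, by simp⟩ fun i => h (w i)) -
    ((Finset.range (n + 1)).inf' ⟨0, by simp⟩ fun i => h (w i))

/-- Number of SAWs of length `n` starting at `v`. -/
noncomputable def sawCount (G : SimpleGraph V) (n : ℕ) (v : V) : ℕ :=
  Nat.card {w : ℕ → V // IsSAWFrom G n v w}

/-- Number of bridges of length `n` starting at `v`. -/
noncomputable def bridgeCount (G : SimpleGraph V) (h : V → ℤ) (n : ℕ) (v : V) : ℕ :=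
  Nat.card {w : ℕ → V // IsBridgeFrom G h n v w}

/-- Number of reversed bridges of length `n` starting at `v`. -/
noncomputable def rbridgeCount (G : SimpleGraph V) (h : V → ℤ) (n : ℕ) (v : V) : ℕ :=
  Nat.card {w : ℕ → V // IsRBridgeFrom G h n v w}

/-- Number of half-space walks of length `n` starting at `v`. -/
noncomputable def hswCount (G : SimpleGraph V) (h : V → ℤ) (n : ℕ) (v : V) : ℕ :=
  Nat.card {w : ℕ → V // IsHSWFrom G h n v w}

/-- Number of bridges of length `n` and span `a` starting at `v`. -/
noncomputable def bridgeSpanCount (G : SimpleGraph V) (h : V → ℤ) (n : ℕ) (v : V) (a : ℤ) : ℕ :=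
  Nat.card {w : ℕ → V // IsBridgeFrom G h n v w ∧ walkSpan h n w = a}

/-- Number of reversed bridges of length `n` and span `a` starting at `v`. -/
noncomputable def rbridgeSpanCount (G : SimpleGraph V) (h : V → ℤ) (n : ℕ) (v : V) (a : ℤ) : ℕ :=
  Nat.card {w : ℕ → V // IsRBridgeFrom G h n v w ∧ walkSpan h n w = a}

/-- `c_n`: maximal number of SAWs of length `n` over all starting vertices. -/
noncomputable def sawSup (G : SimpleGraph V) (n : ℕ) : ℕ :=
  sSup {m | ∃ v : V, m = sawCount G n v}

/-- `b_n`: minimal number of bridges of length `n` over all starting vertices. -/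
noncomputable def bridgeInf (G : SimpleGraph V) (h : V → ℤ) (n : ℕ) : ℕ :=
  sInf {m | ∃ v : V, m = bridgeCount G h n v}

/-- `b̄_n`: minimal number of reversed bridges of length `n` over all starting vertices. -/
noncomputable def rbridgeInf (G : SimpleGraph V) (h : V → ℤ) (n : ℕ) : ℕ :=
  sInf {m | ∃ v : V, m = rbridgeCount G h n v}

/-- `idx` together with the spans `a` form the canonical decomposition of the walk `w`
of length `n` into an alternating sequence of `k` bridges and reversed bridges. -/
noncomputable def IsCanonicalDecomp (h : V → ℤ) (n : ℕ) (w : ℕ → V) (k : ℕ) (a : ℕ → ℤ)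
    (idx : ℕ → ℕ) : Prop :=
  idx 0 = 0 ∧ idx k = n ∧
  ∀ j, 1 ≤ j → j ≤ k →
    idx (j - 1) < idx j ∧ idx j ≤ n ∧
    a j = |h (w (idx j)) - h (w (idx (j - 1)))| ∧
    (∀ i, idx (j - 1) ≤ i → i ≤ n → |h (w i) - h (w (idx (j - 1)))| ≤ a j) ∧
    (∀ i, idx j < i → i ≤ n → |h (w i) - h (w (idx (j - 1)))| < a j)

/-- `h_{n,v}(a_1,…,a_k)`: number of half-space walks of length `n` from `v` whose
canonical decomposition has span sequence `a 1, …, a k`. -/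
noncomputable def hswSeqCount (G : SimpleGraph V) (h : V → ℤ) (n : ℕ) (v : V) (k : ℕ)
    (a : ℕ → ℤ) : ℕ :=
  Nat.card {w : ℕ → V // IsHSWFrom G h n v w ∧ ∃ idx : ℕ → ℕ,
    IsCanonicalDecomp h n w k a idx}

/-- The group `Γ` acts quasi-transitively. -/
noncomputable def QuasiTransitiveSub (G : SimpleGraph V) (Γ : Subgroup (G ≃g G)) : Prop :=
  ∃ S : Finset V, ∀ v : V, ∃ γ ∈ Γ, ∃ s ∈ S, γ s = v

/-- The graph `G` is quasi-transitive. -/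
noncomputable def QuasiTransitive (G : SimpleGraph V) : Prop :=
  ∃ S : Finset V, ∀ v : V, ∃ γ : G ≃g G, ∃ s ∈ S, γ s = v

/-- `(h, Γ)` is a graph height function on `G`. -/
noncomputable def IsGraphHeightFunction (G : SimpleGraph V) (h : V → ℤ) (Γ : Subgroup (G ≃g G)) : Prop :=
  QuasiTransitiveSub G Γ ∧
  (∀ γ ∈ Γ, ∀ u v : V, h (γ v) - h (γ u) = h v - h u) ∧
  (∀ v : V, ∃ u w : V, G.Adj v u ∧ G.Adj v w ∧ h u < h v ∧ h v < h w)

/-- `P_D A`: number of partitions of `A` into distinct parts. -/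
noncomputable def distinctPartitionCount (A : ℕ) : ℕ := (Nat.Partition.distincts A).card

noncomputable def bridgeBeta (G : SimpleGraph V) (h : V → ℤ) : ℝ :=
  Filter.limsup (fun n : ℕ => (bridgeInf G h n : ℝ) ^ (1 / (n : ℝ))) atTop

noncomputable def rbridgeBeta (G : SimpleGraph V) (h : V → ℤ) : ℝ :=
  Filter.limsup (fun n : ℕ => (rbridgeInf G h n : ℝ) ^ (1 / (n : ℝ))) atTop

noncomputable def betaMax (G : SimpleGraph V) (h : V → ℤ) : ℝ :=
  max (bridgeBeta G h) (rbridgeBeta G h)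
/-- Vertices of the Grandparent graph: pairs `(k, f)` where `f i = false` for `i ≥ k`
and for all sufficiently small `i`. -/
def GPVertex : Type :=
  {p : ℤ × (ℤ → Bool) // (∀ i, p.1 ≤ i → p.2 i = false) ∧ ∃ N : ℤ, ∀ i ≤ N, p.2 i = false}

/-- The predecessor map of the Grandparent graph. -/
def GPpred (v : GPVertex) : GPVertex :=
  ⟨(v.val.1 - 1, fun i => if i = v.val.1 - 1 then false else v.val.2 i), by
    constructor
    · intro i hi
      dsimp only at hi ⊢
      split
      · rfl
      · exact v.prop.1 i (by omega)
    · obtain ⟨N, hN⟩ := v.prop.2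
      refine ⟨N, fun i hi => ?_⟩
      dsimp only
      split
      · rfl
      · exact hN i hi⟩

/-- The Grandparent graph. -/
def GP : SimpleGraph GPVertex where
  Adj u v := u ≠ v ∧
    (u = GPpred v ∨ v = GPpred u ∨ u = GPpred (GPpred v) ∨ v = GPpred (GPpred u))
  symm := by
    constructor
    intro u v hv
    exact ⟨Ne.symm hv.1, by tauto⟩
  loopless := by
    constructor
    intro u hu
    exact hu.1 rfl

/-- The height of a vertex of the Grandparent graph. -/
def GPheight (v : GPVertex) : ℤ := v.val.1

/-!
Two adjacent vertices of `GP` have at least two common neighbours exactly when one is the parent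
of the other: a vertex and its grandparent share only the vertex between them. Among these
"thick" neighbours of `v` — its parent and its two children — the parent is the only one adjacent
to all the others, since the two children are siblings. This describes `p(v)` in terms of the
graph alone, so every automorphism commutes with `p`. Hence `Aut(GP)_v` fixes `p(v)`, while
`Aut(GP)_{p(v)}` can move `v = (k, f)` only to its sibling, which it does by flipping bit `k - 1`
of every vertex above height `k - 1`. The translation `(k, f) ↦ (k - 1, f (· + 1))` maps the
vertex `(0, fun _ => false)` to its parent, so a vertex and its parent lie in one orbit although
the two stabiliser orbits have sizes `1` and `2`.
-/

namespace SimpleGraph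

variable {W : Type*} {G : SimpleGraph V} {G' : SimpleGraph W}

def ThickAdj (G : SimpleGraph V) (v w : V) : Prop :=
  G.Adj v w ∧ (G.commonNeighbors v w).Nontrivial

lemma ThickAdj.symm {v w : V} (h : G.ThickAdj v w) : G.ThickAdj w v :=
  ⟨h.1.symm, G.commonNeighbors_symm v w ▸ h.2⟩

def IsCentralThickNeighbor (G : SimpleGraph V) (v w : V) : Prop :=
  G.ThickAdj v w ∧ ∀ x, G.ThickAdj v x → x ≠ w → G.Adj w x

lemma Iso.image_commonNeighbors (γ : G ≃g G') (v w : V) :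
    γ '' G.commonNeighbors v w = G'.commonNeighbors (γ v) (γ w) := by
  ext x
  obtain ⟨x, rfl⟩ := γ.surjective x
  simp [γ.injective.mem_set_image, mem_commonNeighbors, γ.map_adj_iff]

lemma Iso.thickAdj_iff (γ : G ≃g G') {v w : V} :
    G'.ThickAdj (γ v) (γ w) ↔ G.ThickAdj v w := by
  rw [ThickAdj, ThickAdj, γ.map_adj_iff, ← γ.image_commonNeighbors,
    Set.image_nontrivial γ.injective]

lemma Iso.isCentralThickNeighbor_iff (γ : G ≃g G') {v w : V} :
    G'.IsCentralThickNeighbor (γ v) (γ w) ↔ G.IsCentralThickNeighbor v w := by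
  simp only [IsCentralThickNeighbor, γ.surjective.forall, γ.thickAdj_iff, γ.injective.ne_iff,
    γ.map_adj_iff]

end SimpleGraph

namespace GPVertex

lemma ext {a b : GPVertex} (h₁ : a.val.1 = b.val.1) (h₂ : a.val.2 = b.val.2) : a = b :=
  Subtype.ext (Prod.ext h₁ h₂)

lemma ne_of_fst_ne {u v : GPVertex} (h : u.val.1 ≠ v.val.1) : u ≠ v := fun e => h (e ▸ rfl)

@[simp]
lemma pred_fst (v : GPVertex) : (GPpred v).val.1 = v.val.1 - 1 := rfl

lemma pred_snd (v : GPVertex) :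
    (GPpred v).val.2 = Function.update v.val.2 (v.val.1 - 1) false := by
  ext i
  simp [GPpred, Function.update_apply]

def update (v : GPVertex) (k j : ℤ) (b : Bool) (hk : v.val.1 ≤ k) (hj : j < k) : GPVertex :=
  ⟨(k, Function.update v.val.2 j b), by
    refine ⟨fun i hi => ?_, ?_⟩
    · dsimp only at hi ⊢
      rw [Function.update_of_ne (by omega)]
      exact v.prop.1 i (by omega)
    · obtain ⟨N, hN⟩ := v.prop.2
      refine ⟨min N (j - 1), fun i hi => ?_⟩
      dsimp only
      rw [Function.update_of_ne (by omega)]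
      exact hN i (by omega)⟩

def child (b : Bool) (v : GPVertex) : GPVertex :=
  v.update (v.val.1 + 1) v.val.1 b (by omega) (by omega)

@[simp]
lemma child_fst (b : Bool) (v : GPVertex) : (child b v).val.1 = v.val.1 + 1 := rfl

@[simp]
lemma pred_child (b : Bool) (v : GPVertex) : GPpred (child b v) = v := by
  refine ext (by simp) ?_
  rw [pred_snd]
  simp only [child, update, add_sub_cancel_right, Function.update_idem]
  exact Function.update_eq_self_iff.2 (v.prop.1 _ le_rfl).symm

def flip (j : ℤ) (v : GPVertex) : GPVertex :=
  if h : j < v.val.1 then v.update v.val.1 j (!v.val.2 j) le_rfl h else v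

@[simp]
lemma flip_fst (j : ℤ) (v : GPVertex) : (flip j v).val.1 = v.val.1 := by
  unfold flip; split_ifs <;> rfl

lemma flip_snd_of_lt {j : ℤ} {v : GPVertex} (h : j < v.val.1) :
    (flip j v).val.2 = Function.update v.val.2 j (!v.val.2 j) := by
  unfold flip; rw [dif_pos h]; rfl

lemma flip_of_le {j : ℤ} {v : GPVertex} (h : v.val.1 ≤ j) : flip j v = v :=
  dif_neg (by omega)

lemma flip_involutive (j : ℤ) : Function.Involutive (flip j) := by
  intro v
  rcases lt_or_ge j v.val.1 with h | h
  · refine ext (by simp) ?_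
    rw [flip_snd_of_lt (by simpa), flip_snd_of_lt h]
    simp
  · rw [flip_of_le h, flip_of_le h]

lemma flip_ne {j : ℤ} {v : GPVertex} (h : j < v.val.1) : flip j v ≠ v := fun e => by
  have := congrFun (congrArg (fun x : GPVertex => x.val.2) e) j
  simp [flip_snd_of_lt h] at this

lemma commute_flip_pred (j : ℤ) : Function.Commute (flip j) GPpred := by
  intro v
  rcases lt_trichotomy j (v.val.1 - 1) with h | rfl | h
  · refine ext (by simp) ?_
    rw [flip_snd_of_lt (by simpa), pred_snd, pred_snd, flip_snd_of_lt (by omega), flip_fst,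
      Function.update_of_ne h.ne, Function.update_comm h.ne]
  · rw [flip_of_le (by simp)]
    refine ext (by simp) ?_
    rw [pred_snd, pred_snd, flip_snd_of_lt (by omega), flip_fst, Function.update_idem]
  · rw [flip_of_le (by simp; omega), flip_of_le (by omega)]

lemma pred_flip_self (v : GPVertex) : GPpred (flip (v.val.1 - 1) v) = GPpred v := by
  rw [← commute_flip_pred, flip_of_le (by simp)]

lemma eq_or_eq_flip_of_pred_eq {x v : GPVertex} (h : GPpred x = GPpred v) :
    x = v ∨ x = flip (v.val.1 - 1) v := by
  have hfst : x.val.1 = v.val.1 := by simpa using congrArg (fun y : GPVertex => y.val.1) h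
  have hsnd := congrArg
    (fun y : GPVertex => Function.update y.val.2 (v.val.1 - 1) (x.val.2 (v.val.1 - 1))) h
  simp only [pred_snd, hfst, Function.update_idem, Function.update_eq_self] at hsnd
  rcases Bool.eq_or_eq_not (x.val.2 (v.val.1 - 1)) (v.val.2 (v.val.1 - 1)) with hb | hb
  · left
    exact ext hfst (by rw [hsnd, hb, Function.update_eq_self])
  · right
    exact ext (by simp [hfst]) (by rw [hsnd, hb, flip_snd_of_lt (by omega)])

def translate (n : ℤ) (v : GPVertex) : GPVertex :=
  ⟨(v.val.1 + n, fun i => v.val.2 (i - n)), by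
    refine ⟨fun i hi => v.prop.1 _ (by dsimp only at hi; omega), ?_⟩
    obtain ⟨N, hN⟩ := v.prop.2
    exact ⟨N + n, fun i hi => hN _ (by omega)⟩⟩

@[simp]
lemma translate_fst (n : ℤ) (v : GPVertex) : (translate n v).val.1 = v.val.1 + n := rfl

lemma translate_snd (n : ℤ) (v : GPVertex) (i : ℤ) :
    (translate n v).val.2 i = v.val.2 (i - n) := rfl

lemma translate_translate (m n : ℤ) (v : GPVertex) :
    translate m (translate n v) = translate (n + m) v :=
  ext (add_assoc _ _ _) (funext fun i => congrArg v.val.2 (by omega))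

lemma translate_zero (v : GPVertex) : translate 0 v = v :=
  ext (add_zero _) (funext fun i => congrArg v.val.2 (sub_zero i))

def translateEquiv (n : ℤ) : GPVertex ≃ GPVertex where
  toFun := translate n
  invFun := translate (-n)
  left_inv v := by rw [translate_translate, add_neg_cancel, translate_zero]
  right_inv v := by rw [translate_translate, neg_add_cancel, translate_zero]

lemma commute_translate_pred (n : ℤ) : Function.Commute (translate n) GPpred := by
  intro v
  refine ext (by simp; ring) (funext fun i => ?_)
  simp only [translate_snd, pred_snd, translate_fst, Function.update_apply]
  exact if_congr (by omega) rfl rfl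

def origin : GPVertex := ⟨(0, fun _ => false), fun _ _ => rfl, 0, fun _ _ => rfl⟩

lemma translate_neg_one_origin : translate (-1) origin = GPpred origin :=
  ext rfl (by rw [pred_snd]; exact (Function.update_eq_self _ _).symm)

end GPVertex

namespace GP

open GPVertex

def isoOfCommute (e : GPVertex ≃ GPVertex) (he : Function.Commute e GPpred) : GP ≃g GP where
  toEquiv := e
  map_rel_iff' := by
    intro a b
    simp only [GP, ← he.eq, e.injective.eq_iff, ne_eq]

lemma adj_pred (v : GPVertex) : GP.Adj v (GPpred v) :=
  ⟨ne_of_fst_ne (by simp; omega), Or.inr (Or.inl rfl)⟩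

lemma adj_pred_pred (v : GPVertex) : GP.Adj v (GPpred (GPpred v)) :=
  ⟨ne_of_fst_ne (by simp; omega), Or.inr (Or.inr (Or.inr rfl))⟩

lemma adj_cases {v x : GPVertex} (h : GP.Adj v x) :
    (v = GPpred x ∧ x.val.1 = v.val.1 + 1) ∨ (x = GPpred v ∧ x.val.1 = v.val.1 - 1) ∨
      (v = GPpred (GPpred x) ∧ x.val.1 = v.val.1 + 2) ∨
      (x = GPpred (GPpred v) ∧ x.val.1 = v.val.1 - 2) := by
  rcases h.2 with rfl | rfl | rfl | rfl
  · exact Or.inl ⟨rfl, by simp⟩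
  · exact Or.inr (Or.inl ⟨rfl, by simp⟩)
  · exact Or.inr (Or.inr (Or.inl ⟨rfl, by simp; omega⟩))
  · exact Or.inr (Or.inr (Or.inr ⟨rfl, by simp; omega⟩))

lemma fst_ne_of_adj {v x : GPVertex} (h : GP.Adj v x) : v.val.1 ≠ x.val.1 := by
  rcases adj_cases h with ⟨-, e⟩ | ⟨-, e⟩ | ⟨-, e⟩ | ⟨-, e⟩ <;> omega

lemma eq_pred_of_mem_commonNeighbors_pred_pred {v x : GPVertex}
    (hx : x ∈ GP.commonNeighbors v (GPpred (GPpred v))) : x = GPpred v := by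
  obtain ⟨h₁, h₂⟩ := hx
  have hv : (GPpred (GPpred v)).val.1 = v.val.1 - 2 := by simp; omega
  rcases adj_cases h₁ with ⟨e₁, f₁⟩ | ⟨e₁, f₁⟩ | ⟨e₁, f₁⟩ | ⟨e₁, f₁⟩ <;>
    rcases adj_cases h₂ with ⟨e₂, f₂⟩ | ⟨e₂, f₂⟩ | ⟨e₂, f₂⟩ | ⟨e₂, f₂⟩ <;>
    omega

lemma not_thickAdj_pred_pred (v : GPVertex) : ¬ GP.ThickAdj v (GPpred (GPpred v)) :=
  fun ⟨_, hn⟩ => Set.not_nontrivial_iff.2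
    (fun _ hx _ hy => (eq_pred_of_mem_commonNeighbors_pred_pred hx).trans
      (eq_pred_of_mem_commonNeighbors_pred_pred hy).symm) hn

lemma thickAdj_pred (v : GPVertex) : GP.ThickAdj v (GPpred v) := by
  refine ⟨adj_pred v, GPpred (GPpred v), ⟨adj_pred_pred v, adj_pred _⟩, child true v,
    ⟨?_, ?_⟩, ne_of_fst_ne (by simp; omega)⟩
  · simpa using (adj_pred (child true v)).symm
  · simpa using (adj_pred_pred (child true v)).symm

lemma eq_pred_or_pred_eq_of_thickAdj {v x : GPVertex} (h : GP.ThickAdj v x) :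
    x = GPpred v ∨ v = GPpred x := by
  rcases adj_cases h.1 with ⟨e, -⟩ | ⟨e, -⟩ | ⟨e, -⟩ | ⟨e, -⟩
  · exact Or.inr e
  · exact Or.inl e
  · exact absurd (e ▸ h.symm) (not_thickAdj_pred_pred x)
  · exact absurd (e ▸ h) (not_thickAdj_pred_pred v)

lemma isCentralThickNeighbor_iff {v w : GPVertex} :
    GP.IsCentralThickNeighbor v w ↔ w = GPpred v := by
  constructor
  · rintro ⟨hw, hcentral⟩
    refine (eq_pred_or_pred_eq_of_thickAdj hw).resolve_right fun hv => ?_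
    have hsib : GP.ThickAdj v (flip (w.val.1 - 1) w) := by
      simpa [hv, pred_flip_self] using (thickAdj_pred (flip (w.val.1 - 1) w)).symm
    exact fst_ne_of_adj (hcentral _ hsib (flip_ne (by omega))) (by simp)
  · rintro rfl
    refine ⟨thickAdj_pred v, fun x hx hne => ?_⟩
    rcases eq_pred_or_pred_eq_of_thickAdj hx with rfl | rfl
    · exact absurd rfl hne
    · exact (adj_pred_pred x).symm

lemma _root_.SimpleGraph.Iso.map_GPpred (γ : GP ≃g GP) (v : GPVertex) :
    γ (GPpred v) = GPpred (γ v) :=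
  isCentralThickNeighbor_iff.1 (γ.isCentralThickNeighbor_iff.2 (isCentralThickNeighbor_iff.2 rfl))

lemma orbit_pred_under_stabilizer_eq (v : GPVertex) :
    {w | ∃ γ : GP ≃g GP, γ v = v ∧ γ (GPpred v) = w} = {GPpred v} := by
  ext w
  constructor
  · rintro ⟨γ, hγ, rfl⟩
    rw [γ.map_GPpred, hγ]; rfl
  · rintro rfl
    exact ⟨.refl, rfl, rfl⟩

lemma orbit_under_stabilizer_pred_eq (v : GPVertex) :
    {w | ∃ γ : GP ≃g GP, γ (GPpred v) = GPpred v ∧ γ v = w} = {v, flip (v.val.1 - 1) v} := by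
  ext w
  constructor
  · rintro ⟨γ, hγ, rfl⟩
    exact eq_or_eq_flip_of_pred_eq (by rw [← γ.map_GPpred, hγ])
  · rintro (rfl | rfl)
    · exact ⟨.refl, rfl, rfl⟩
    · exact ⟨isoOfCommute (flip_involutive _).toPerm (commute_flip_pred _),
        flip_of_le (by simp), rfl⟩

end GP

/-- Every automorphism of `GP` fixing `v` fixes `p(v)`, so
`|Aut(GP)_v p(v)| = 1`, while `|Aut(GP)_{p(v)} v| = 2`; in particular the action of
`Aut(GP)` on `GP` is not unimodular. -/
theorem statement_13 :
    (∀ v : GPVertex,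
      (∀ γ : GP ≃g GP, γ v = v → γ (GPpred v) = GPpred v) ∧
      Nat.card {w : GPVertex | ∃ γ : GP ≃g GP, γ v = v ∧ γ (GPpred v) = w} = 1 ∧
      Nat.card {w : GPVertex | ∃ γ : GP ≃g GP, γ (GPpred v) = GPpred v ∧ γ v = w} = 2) ∧
    ¬ (∀ u v : GPVertex, (∃ γ : GP ≃g GP, γ u = v) →
        Nat.card {w : GPVertex | ∃ γ : GP ≃g GP, γ u = u ∧ γ v = w} =
          Nat.card {w : GPVertex | ∃ γ : GP ≃g GP, γ v = v ∧ γ u = w}) := by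
  have card_orbit_pred v : Nat.card {w | ∃ γ : GP ≃g GP, γ v = v ∧ γ (GPpred v) = w} = 1 := by
    rw [GP.orbit_pred_under_stabilizer_eq, Nat.card_coe_set_eq, Set.ncard_singleton]
  have card_orbit v :
      Nat.card {w | ∃ γ : GP ≃g GP, γ (GPpred v) = GPpred v ∧ γ v = w} = 2 := by
    rw [GP.orbit_under_stabilizer_pred_eq, Nat.card_coe_set_eq,
      Set.ncard_pair (GPVertex.flip_ne (by omega)).symm]
  refine ⟨fun v => ⟨fun γ hγ => by rw [γ.map_GPpred, hγ], card_orbit_pred v, card_orbit v⟩,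
    fun hunimodular => ?_⟩
  have h := hunimodular GPVertex.origin (GPpred GPVertex.origin)
    ⟨GP.isoOfCommute (GPVertex.translateEquiv (-1)) (GPVertex.commute_translate_pred _),
      GPVertex.translate_neg_one_origin⟩
  rw [card_orbit_pred, card_orbit] at h
  exact absurd h (by decide)
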